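/- arXiv:1811.11810 — 2 statements merged into one kernel-verified Lean document; each statement's English description precedes it below -/
import Mathlib

section
/- For all integers r ≥ 3 and k ≥ 0, r·(⌊k/2⌋ + 1) + r·((r-1)/2)·⌈k/2⌉ ≤ C(r+k, r-1), where the inequality is interpreted after multiplying through by 2: 2r(⌊k/2⌋+1) + r(r-1)⌈k/2⌉ ≤ 2·C(r+k, r-1). -/
lemma two_choose_two (n : ℕ) : 2 * n.choose 2 = n * (n - 1) := by
  induction n with
  | zero => simp
  | succ m ih =>
    rw [Nat.choose_succ_succ, Nat.choose_one_right]
    cases m with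
    | zero => simp
    | succ p =>
      have h : p + 1 - 1 = p := rfl
      rw [h] at ih
      simp only [Nat.succ_sub_one]
      nlinarith [ih]

/-- For all integers `r ≥ 3` and `k ≥ 0`,
`2r(⌊k/2⌋+1) + r(r-1)⌈k/2⌉ ≤ 2·C(r+k, r-1)`. -/
theorem stmt_3 (r k : ℕ) (hr : 3 ≤ r) :
    2 * r * (k / 2 + 1) + r * (r - 1) * ((k + 1) / 2) ≤ 2 * (r + k).choose (r - 1) := by
  obtain ⟨t, rfl⟩ : ∃ t, r = t + 3 := ⟨r - 3, by omega⟩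
  simp only [show t + 3 - 1 = t + 2 from rfl]
  induction k using Nat.strong_induction_on with
  | _ k ih =>
    match k with
    | 0 =>
      have h1 : (t + 3).choose (t + 2) = t + 3 := by
        have := Nat.choose_symm (n := t + 3) (k := 1) (by omega)
        simp [this]
      simp [h1]
    | 1 =>
      have h1 : (t + 4).choose (t + 2) = (t + 4).choose 2 := by
        have := Nat.choose_symm (n := t + 4) (k := 2) (by omega)
        rw [show t + 4 - 2 = t + 2 from rfl] at this
        exact this
      have h2 := two_choose_two (t + 4)
      rw [show t + 4 - 1 = t + 3 from rfl] at h2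
      rw [show t + 3 + 1 = t + 4 from rfl, h1]
      norm_num
      nlinarith [h2]
    | (m + 2) =>
      have IH := ih m (by omega)
      have hp1 : (t + 3 + (m + 2)).choose (t + 2)
          = (t + m + 4).choose (t + 1) + (t + m + 4).choose (t + 2) := by
        rw [show t + 3 + (m + 2) = (t + m + 4) + 1 by ring]
        exact Nat.choose_succ_succ _ _
      have hp2 : (t + m + 4).choose (t + 2)
          = (t + m + 3).choose (t + 1) + (t + m + 3).choose (t + 2) := by
        exact Nat.choose_succ_succ _ _
      have hm1 : (t + 3).choose (t + 1) ≤ (t + m + 3).choose (t + 1) :=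
        Nat.choose_le_choose _ (by omega)
      have hm2 : (t + 3).choose (t + 1) ≤ (t + m + 4).choose (t + 1) :=
        Nat.choose_le_choose _ (by omega)
      have hc : (t + 3).choose (t + 1) = (t + 3).choose 2 := by
        have := Nat.choose_symm (n := t + 3) (k := 2) (by omega)
        rw [show t + 3 - 2 = t + 1 from rfl] at this
        exact this
      have h2 := two_choose_two (t + 3)
      rw [show t + 3 - 1 = t + 2 from rfl] at h2
      have hL1 : (m + 2) / 2 = m / 2 + 1 := by omega
      have hL2 : (m + 2 + 1) / 2 = (m + 1) / 2 + 1 := by omega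
      rw [hL1, hL2, hp1, hp2]
      rw [show t + 3 + m = t + m + 3 by ring] at IH
      nlinarith [IH, hm1, hm2, hc, h2]
end

section
/- For integers m ≥ 1 and 0 ≤ z ≤ m, the sum ∑_{k=0}^{z-1} ln(1 - k/m) differs from z·∫₀¹ ln(1 - x·z/m) dx by at most 1 + (ln m)/2, where terms with k = m are interpreted via the convention that the k = m-1 error term equals 1. -/
/-!
Both sides have closed forms: `z ∫₀¹ log (1 - x z / m) dx = ∫₀^z log (1 - t / m) dt`, and
the `k`-th summand minus the integral over `[k, k + 1]` is the error `ε(m - k)` of the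
right-endpoint rule for `∫_{c-1}^c log`, namely `ε(c) = 1 - (c - 1) log (c / (c - 1))`.
Since `log` is increasing, `ε(c) ≥ 0`; since it is concave, the trapezoid rule underestimates,
so `ε(c) ≤ (log c - log (c - 1)) / 2` for `c > 1`, which telescopes to `(log m) / 2` as long
as `z < m`. The last step `c = 1` of the case `z = m` contributes `ε(1) = 1`.
-/

open Real Finset

noncomputable def logStepError (c : ℝ) : ℝ := 1 - (c - 1) * (log c - log (c - 1))

lemma logStepError_one : logStepError 1 = 1 := by simp [logStepError]

lemma logStepError_nonneg {c : ℝ} (hc : 1 ≤ c) : 0 ≤ logStepError c := by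
  rcases hc.eq_or_lt with rfl | hc
  · simp [logStepError]
  have hc1 : 0 < c - 1 := by linarith
  have h := log_le_sub_one_of_pos (div_pos (by linarith) hc1 : 0 < c / (c - 1))
  rw [log_div (by linarith) hc1.ne', div_sub_one hc1.ne', sub_sub_cancel, le_div_iff₀ hc1] at h
  unfold logStepError
  nlinarith

lemma logStepError_le_half {c : ℝ} (hc : 1 < c) :
    logStepError c ≤ (log c - log (c - 1)) / 2 := by
  have hc1 : 0 < c - 1 := by linarith
  have hc2 : 0 < 2 * c - 1 := by linarith
  have h := le_log_one_add_of_nonneg (inv_pos.2 hc1).le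
  rw [show 1 + (c - 1)⁻¹ = c / (c - 1) by field_simp; ring, log_div (by linarith) hc1.ne',
    show 2 * (c - 1)⁻¹ / ((c - 1)⁻¹ + 2) = 2 / (2 * c - 1) by field_simp; ring,
    div_le_iff₀ hc2] at h
  unfold logStepError
  linarith

lemma mul_integral_log_one_sub_mul_div {m : ℝ} (hm : m ≠ 0) (z : ℝ) :
    z * ∫ x in (0:ℝ)..1, log (1 - x * z / m) = (m - z) * (log m - log (m - z)) - z := by
  have hsub : (m - z) * log (1 - z / m) = (m - z) * (log (m - z) - log m) := by
    rcases eq_or_ne z m with rfl | hzm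
    · simp
    rw [one_sub_div hm, log_div (sub_ne_zero.2 hzm.symm) hm]
  have hscale : m * (1 - z / m) = m - z := by field_simp
  calc z * ∫ x in (0:ℝ)..1, log (1 - x * z / m)
      = -m * (-(z / m) • ∫ x in (0:ℝ)..1, log (-(z / m) * x + 1)) := by
        rw [smul_eq_mul, ← mul_assoc, neg_mul_neg, mul_div_cancel₀ z hm]
        congr 2 with x
        ring_nf
    _ = (m - z) * (log m - log (m - z)) - z := by
        rw [intervalIntegral.smul_integral_comp_mul_add, integral_log]
        simp only [mul_zero, mul_one, zero_add, log_one, neg_add_eq_sub]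
        linear_combination (1 - log (1 - z / m)) * hscale - hsub

lemma sum_log_one_sub_div_sub_mul_integral {m : ℝ} (hm : m ≠ 0) {z : ℕ} (hz : (z : ℝ) ≤ m) :
    ∑ k ∈ range z, log (1 - k / m) - z * ∫ x in (0:ℝ)..1, log (1 - x * z / m) =
      ∑ k ∈ range z, logStepError (m - k) := by
  set I : ℝ → ℝ := fun y ↦ (m - y) * (log m - log (m - y)) - y with hI
  have htel : (z : ℝ) * ∫ x in (0:ℝ)..1, log (1 - x * z / m) =
      ∑ k ∈ range z, (I (k + 1 : ℕ) - I k) := by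
    rw [sum_range_sub (fun k : ℕ ↦ I k), mul_integral_log_one_sub_mul_div hm]
    simp [hI]
  rw [htel, ← sum_sub_distrib]
  refine sum_congr rfl fun k hk ↦ ?_
  have hkm : (k : ℝ) ≠ m := (Nat.cast_lt.2 (mem_range.1 hk)).trans_le hz |>.ne
  rw [one_sub_div hm, log_div (sub_ne_zero.2 hkm.symm) hm, logStepError, hI]
  push_cast
  rw [show m - ((k : ℝ) + 1) = m - k - 1 by ring]
  ring

lemma sum_logStepError_nonneg {m : ℝ} {z : ℕ} (hz : (z : ℝ) ≤ m) :
    0 ≤ ∑ k ∈ range z, logStepError (m - k) :=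
  sum_nonneg fun k hk ↦ logStepError_nonneg <| by
    have : ((k + 1 : ℕ) : ℝ) ≤ z := Nat.cast_le.2 (mem_range.1 hk)
    push_cast at this
    linarith

lemma sum_logStepError_le {m : ℝ} {z : ℕ} (hz : (z : ℝ) < m) :
    ∑ k ∈ range z, logStepError (m - k) ≤ (log m - log (m - z)) / 2 :=
  calc ∑ k ∈ range z, logStepError (m - k)
      ≤ ∑ k ∈ range z, (log (m - k) - log (m - (k + 1 : ℕ))) / 2 := by
        refine sum_le_sum fun k hk ↦ ?_
        have : ((k + 1 : ℕ) : ℝ) ≤ z := Nat.cast_le.2 (mem_range.1 hk)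
        push_cast at this ⊢
        rw [show m - ((k : ℝ) + 1) = m - k - 1 by ring]
        exact logStepError_le_half (by linarith)
    _ = (log m - log (m - z)) / 2 := by
        rw [← sum_div, sum_range_sub' (fun k : ℕ ↦ log (m - k))]
        simp

/-- For integers `m ≥ 1` and `0 ≤ z ≤ m`, the sum `∑_{k=0}^{z-1} ln(1 - k/m)` differs
from `z·∫₀¹ ln(1 - x·z/m) dx` by at most `1 + (ln m)/2`. -/
theorem stmt_11 (m z : ℕ) (hm : 1 ≤ m) (hz : z ≤ m) :
    |(∑ k ∈ Finset.range z, Real.log (1 - (k : ℝ) / m)) -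
        z * ∫ x in (0:ℝ)..1, Real.log (1 - x * z / m)| ≤ 1 + Real.log m / 2 := by
  have hm0 : (m : ℝ) ≠ 0 := by positivity
  have hlog : 0 ≤ log (m : ℝ) := log_nonneg (by exact_mod_cast hm)
  rw [sum_log_one_sub_div_sub_mul_integral hm0 (by exact_mod_cast hz), abs_le]
  refine ⟨by linarith [sum_logStepError_nonneg (m := m) (by exact_mod_cast hz)], ?_⟩
  rcases hz.lt_or_eq with hlt | rfl
  · have hsum := sum_logStepError_le (m := m) (by exact_mod_cast hlt)
    have : 0 ≤ log ((m : ℝ) - z) := log_nonneg <| by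
      have : ((z + 1 : ℕ) : ℝ) ≤ m := Nat.cast_le.2 hlt
      push_cast at this
      linarith
    linarith
  · obtain ⟨n, rfl⟩ := Nat.exists_eq_add_one.2 hm
    have hsum := sum_logStepError_le (m := (n + 1 : ℕ)) (z := n) (by push_cast; linarith)
    rw [sum_range_succ, show ((n + 1 : ℕ) : ℝ) - n = 1 by push_cast; ring, logStepError_one]
    rw [show ((n + 1 : ℕ) : ℝ) - n = 1 by push_cast; ring, log_one] at hsum
    linarith
end
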